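/- Let S have (p,δ)-structure with characteristics (κ₀, κ₁, p) for some p ∈ (1,∞) and δ ≥ 0. Then there exist constants c, C > 0 depending only on the characteristics (κ₀, κ₁, p) of S such that for all P, Q ∈ ℝ^{3×3}: c·φ_{|P^sym|}(|P^sym − Q^sym|) ≤ (S(P) − S(Q))·(P − Q) ≤ C·φ_{|P^sym|}(|P^sym − Q^sym|), where φ_a denotes the shifted N-function of φ = φ_{p,δ}. -/

import Mathlib

noncomputable section

open Matrix

attribute [local instance] Matrix.normedAddCommGroup Matrix.normedSpace

/-- 3×3 real matrices. -/
abbrev Mat3 := Matrix (Fin 3) (Fin 3) ℝ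

/-- The symmetric part `P^sym = (P + Pᵀ)/2` of a matrix. -/
def msym (P : Mat3) : Mat3 := (1 / 2 : ℝ) • (P + Pᵀ)

/-- The scalar product of tensors `A·B = Σ_{i,j} A_{ij} B_{ij}`. -/
def mdot (A B : Mat3) : ℝ := ∑ i, ∑ j, A i j * B i j

/-- The Euclidean (Frobenius) norm `|A| = √(A·A)`. -/
def mnorm (A : Mat3) : ℝ := Real.sqrt (mdot A A)

/-- The N-function `φ_{p,δ}(t) = ∫₀ᵗ (δ+s)^{p-2} s ds`. -/
def phi (p δ t : ℝ) : ℝ := ∫ s in (0:ℝ)..t, (δ + s) ^ (p - 2) * s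

/-- Its first derivative `φ'(t) = (δ+t)^{p-2} t`. -/
def phi' (p δ t : ℝ) : ℝ := (δ + t) ^ (p - 2) * t

/-- Its second derivative `φ''(t) = (p-2)(δ+t)^{p-3} t + (δ+t)^{p-2}` (for `t > 0`). -/
def phi'' (p δ t : ℝ) : ℝ := (p - 2) * (δ + t) ^ (p - 3) * t + (δ + t) ^ (p - 2)

/-- The partial derivative `∂_{kl} S_{ij}(P)` of the `(i,j)` component of `S`
with respect to the `(k,l)` matrix entry. -/
def DS (S : Mat3 → Mat3) (P : Mat3) (k l i j : Fin 3) : ℝ :=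
  fderiv ℝ S P (Matrix.single k l 1) i j

/-- A tensor field `S` has `(p,δ)`-structure with characteristics `(κ₀, κ₁, p)`. -/
structure PDelta (p δ κ₀ κ₁ : ℝ) (S : Mat3 → Mat3) : Prop where
  cont : Continuous S
  smooth : ContDiffOn ℝ 1 S {(0 : Mat3)}ᶜ
  symval : ∀ P, (S P)ᵀ = S P
  symdep : ∀ P, S P = S (msym P)
  zero : S 0 = 0
  lower : ∀ P Q : Mat3, msym P ≠ 0 →
    κ₀ * phi'' p δ (mnorm (msym P)) * (mnorm (msym Q)) ^ 2 ≤
      ∑ i, ∑ j, ∑ k, ∑ l, DS S P k l i j * Q i j * Q k l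
  upper : ∀ P : Mat3, msym P ≠ 0 → ∀ i j k l : Fin 3,
    |DS S P k l i j| ≤ κ₁ * phi'' p δ (mnorm (msym P))

/-- The tensor field `F(P) = (δ + |P^sym|)^{(p-2)/2} P^sym` associated to `S`. -/
def Fassoc (p δ : ℝ) (P : Mat3) : Mat3 :=
  (δ + mnorm (msym P)) ^ ((p - 2) / 2) • msym P

/-- The shifted N-function `φ_a(t) = ∫₀ᵗ φ'(a+s)·s/(a+s) ds`. -/
def phiShift (p δ a t : ℝ) : ℝ := ∫ s in (0:ℝ)..t, phi' p δ (a + s) * s / (a + s)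

/-!
Replacing `P, Q` by their symmetric parts `A, B` changes neither side. Along the segment
`X(t) = B + t (A - B)` the structure conditions bound `DS(X(t)) (A - B) · (A - B)` above and below
by multiples of `(δ + |X(t)|)^(p-2) |A - B|²`, so by the fundamental theorem of calculus it suffices
to show `∫₀¹ (δ + |X(t)|)^(p-2) dt ∼ (δ + |A| + |B|)^(p-2)`. This follows from
`|(1 - t)|B| - t|A|| ≤ |X(t)| ≤ |A| + |B|`; for `p < 2` the integrand may blow up like
`|t - t₀|^(p-2)`, which is integrable because `p > 1`. Finally `δ + |A| + |B| ∼ δ + |A| + |A - B|`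
and `φ_a(t) ∼ (δ + a + t)^(p-2) t²`. Segments through `0`, where `S` need not be differentiable,
are limits of segments shifted off `0`.
-/

open MeasureTheory Set

section MatrixFacts

def flattenL2 : Mat3 →ₗ[ℝ] EuclideanSpace ℝ (Fin 3 × Fin 3) where
  toFun A := WithLp.toLp 2 fun x => A x.1 x.2
  map_add' _ _ := rfl
  map_smul' _ _ := rfl

lemma mdot_eq_inner (A B : Mat3) : mdot A B = inner ℝ (flattenL2 A) (flattenL2 B) := by
  simp only [mdot, PiLp.inner_apply, RCLike.inner_apply, conj_trivial, Fintype.sum_prod_type]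
  exact Finset.sum_congr rfl fun i _ => Finset.sum_congr rfl fun j _ => mul_comm _ _

lemma mnorm_eq_norm (A : Mat3) : mnorm A = ‖flattenL2 A‖ := by
  rw [mnorm, mdot_eq_inner, real_inner_self_eq_norm_sq, Real.sqrt_sq (norm_nonneg _)]

lemma flattenL2_injective : Function.Injective flattenL2 := fun A B h => by
  ext i j
  exact congrArg (fun v : EuclideanSpace ℝ (Fin 3 × Fin 3) => v (i, j)) h

lemma mnorm_nonneg (A : Mat3) : 0 ≤ mnorm A := Real.sqrt_nonneg _

lemma mnorm_sq (A : Mat3) : mnorm A ^ 2 = mdot A A := by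
  rw [mnorm_eq_norm, mdot_eq_inner, real_inner_self_eq_norm_sq]

lemma mnorm_pos {A : Mat3} (hA : A ≠ 0) : 0 < mnorm A := by
  rw [mnorm_eq_norm, norm_pos_iff]
  exact fun h => hA (flattenL2_injective (h.trans (map_zero _).symm))

lemma mnorm_add_le (A B : Mat3) : mnorm (A + B) ≤ mnorm A + mnorm B := by
  simp only [mnorm_eq_norm, map_add]
  exact norm_add_le _ _

lemma mnorm_smul (t : ℝ) (A : Mat3) : mnorm (t • A) = |t| * mnorm A := by
  rw [mnorm_eq_norm, mnorm_eq_norm, map_smul, norm_smul, Real.norm_eq_abs]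

lemma mnorm_neg (A : Mat3) : mnorm (-A) = mnorm A := by
  rw [mnorm_eq_norm, mnorm_eq_norm, map_neg, norm_neg]

lemma abs_mnorm_sub_mnorm_le (A B : Mat3) : |mnorm A - mnorm B| ≤ mnorm (A - B) := by
  simp only [mnorm_eq_norm, map_sub]
  exact abs_norm_sub_norm_le _ _

lemma abs_apply_le_mnorm (A : Mat3) (i j : Fin 3) : |A i j| ≤ mnorm A := by
  rw [mnorm_eq_norm]
  exact PiLp.norm_apply_le (flattenL2 A) (i, j)

lemma mnorm_sub_le (A B : Mat3) : mnorm (A - B) ≤ mnorm A + mnorm B := by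
  simp only [mnorm_eq_norm, map_sub]
  exact norm_sub_le _ _

@[fun_prop]
lemma continuous_mnorm : Continuous mnorm := by
  simp only [funext mnorm_eq_norm]
  exact continuous_norm.comp (LinearMap.continuous_of_finiteDimensional _)

lemma mdot_sub_left (A B C : Mat3) : mdot (A - B) C = mdot A C - mdot B C := by
  simp only [mdot_eq_inner, map_sub, inner_sub_left]

@[simp] lemma mnorm_zero : mnorm 0 = 0 := by simp [mnorm_eq_norm]

@[simp] lemma mdot_zero_right (A : Mat3) : mdot A 0 = 0 := by simp [mdot]

lemma continuous_mdot_left (B : Mat3) : Continuous fun A => mdot A B := by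
  unfold mdot; fun_prop

lemma msym_eq_self {P : Mat3} (hP : Pᵀ = P) : msym P = P := by
  rw [msym, hP, ← two_smul ℝ P, smul_smul]; norm_num

lemma transpose_msym (P : Mat3) : (msym P)ᵀ = msym P := by
  rw [msym, transpose_smul, transpose_add, transpose_transpose, add_comm]

lemma msym_sub (P Q : Mat3) : msym (P - Q) = msym P - msym Q := by
  simp only [msym, transpose_sub, ← smul_sub]; abel_nf

lemma mdot_msym_right {M : Mat3} (hM : Mᵀ = M) (N : Mat3) : mdot M (msym N) = mdot M N := by
  have h : mdot M Nᵀ = mdot M N := by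
    conv_lhs => rw [← hM]
    simp only [mdot, transpose_apply]
    exact Finset.sum_comm
  simp only [msym, mdot_eq_inner, map_smul, map_add, inner_smul_right, inner_add_right] at h ⊢
  rw [h]; ring

lemma mdot_apply_eq_sum (L : Mat3 →L[ℝ] Mat3) (D : Mat3) :
    mdot (L D) D = ∑ i, ∑ j, ∑ k, ∑ l, L (single k l 1) i j * D i j * D k l := by
  have hL : ∀ i j, L D i j = ∑ k, ∑ l, L (single k l 1) i j * D k l := by
    intro i j
    conv_lhs => rw [matrix_eq_sum_single D]
    simp only [map_sum, Matrix.sum_apply]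
    refine Finset.sum_congr rfl fun k _ => Finset.sum_congr rfl fun l _ => ?_
    rw [show single k l (D k l) = D k l • single k l (1 : ℝ) by
        rw [smul_single, smul_eq_mul, mul_one],
      map_smul, Matrix.smul_apply, smul_eq_mul, mul_comm]
  unfold mdot
  simp only [hL, Finset.sum_mul]
  exact Finset.sum_congr rfl fun i _ => Finset.sum_congr rfl fun j _ =>
    Finset.sum_congr rfl fun k _ => Finset.sum_congr rfl fun l _ => by ring

lemma exists_symm_ne_zero_mdot_eq_zero (V : Mat3) :
    ∃ E : Mat3, Eᵀ = E ∧ E ≠ 0 ∧ mdot V E = 0 := by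
  set F : Mat3 := single 0 0 1
  set G : Mat3 := single 1 1 1
  by_cases hVF : mdot V F = 0
  · exact ⟨F, by simp [F], fun h0 => by simpa [F] using congrFun (congrFun h0 0) 0, hVF⟩
  refine ⟨mdot V G • F - mdot V F • G, by simp [F, G], fun h0 => hVF ?_, ?_⟩
  · simpa [F, G] using congrFun (congrFun h0 1) 1
  · simp only [mdot_eq_inner, map_sub, map_smul, inner_sub_right, inner_smul_right]; ring

end MatrixFacts

section Scalar

lemma rpow_le_rpow_abs_mul_rpow {x y k q : ℝ} (hy : 0 < y) (hk : 1 ≤ k) (hxy : x ≤ k * y)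
    (hyx : y ≤ k * x) : x ^ q ≤ k ^ |q| * y ^ q := by
  have hk0 : 0 < k := by linarith
  have hx : 0 < x := pos_of_mul_pos_right (hy.trans_le hyx) hk0.le
  rcases le_or_gt 0 q with hq | hq
  · rw [abs_of_nonneg hq, ← Real.mul_rpow hk0.le hy.le]
    exact Real.rpow_le_rpow hx.le hxy hq
  · have hyk : y / k ≤ x := by rwa [div_le_iff₀' hk0]
    calc x ^ q ≤ (y / k) ^ q := Real.rpow_le_rpow_of_nonpos (by positivity) hyk hq.le
      _ = k ^ |q| * y ^ q := by
        rw [Real.div_rpow hy.le hk0.le, abs_of_neg hq, Real.rpow_neg hk0.le, div_eq_inv_mul]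

lemma rpow_sub_two_eq {p x : ℝ} (hx : x ≠ 0) : x ^ (p - 2) = x ^ (p - 3) * x := by
  rw [← Real.rpow_add_one hx]; ring_nf

lemma phi''_eq {p δ t : ℝ} (hδt : 0 < δ + t) :
    phi'' p δ t = (δ + t) ^ (p - 3) * (δ + (p - 1) * t) := by
  rw [phi'', rpow_sub_two_eq hδt.ne']; ring

lemma phi''_comparable {p δ t : ℝ} (hδ : 0 ≤ δ) (ht : 0 < t) :
    min 1 (p - 1) * (δ + t) ^ (p - 2) ≤ phi'' p δ t ∧
      phi'' p δ t ≤ max 1 (p - 1) * (δ + t) ^ (p - 2) := by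
  have hδt : 0 < δ + t := by linarith
  rw [phi''_eq hδt, rpow_sub_two_eq hδt.ne']
  constructor
  · calc min 1 (p - 1) * ((δ + t) ^ (p - 3) * (δ + t))
        = (δ + t) ^ (p - 3) * (min 1 (p - 1) * δ + min 1 (p - 1) * t) := by ring
      _ ≤ (δ + t) ^ (p - 3) * (δ + (p - 1) * t) := by
        gcongr
        · exact mul_le_of_le_one_left hδ (min_le_left _ _)
        · exact min_le_right _ _
  · calc (δ + t) ^ (p - 3) * (δ + (p - 1) * t)
        ≤ (δ + t) ^ (p - 3) * (max 1 (p - 1) * δ + max 1 (p - 1) * t) := by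
          gcongr
          · exact le_mul_of_one_le_left hδ (le_max_left _ _)
          · exact le_max_right _ _
      _ = max 1 (p - 1) * ((δ + t) ^ (p - 3) * (δ + t)) := by ring

end Scalar

section Integrals

lemma mul_sub_le_integral_of_le_on {f : ℝ → ℝ} {a b u v m : ℝ} (hau : a ≤ u) (huv : u ≤ v)
    (hvb : v ≤ b) (hf : IntervalIntegrable f volume a b) (hf0 : ∀ t ∈ Icc a b, 0 ≤ f t)
    (hm : ∀ t ∈ Icc u v, m ≤ f t) : m * (v - u) ≤ ∫ t in a..b, f t := by
  have hfuv : IntervalIntegrable f volume u v :=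
    hf.mono_set (by
      rw [uIcc_of_le huv, uIcc_of_le (hau.trans (huv.trans hvb))]; exact Icc_subset_Icc hau hvb)
  calc m * (v - u) = ∫ _ in u..v, m := by simp [mul_comm]
    _ ≤ ∫ t in u..v, f t := intervalIntegral.integral_mono_on huv intervalIntegrable_const hfuv hm
    _ ≤ ∫ t in a..b, f t := by
      refine intervalIntegral.integral_mono_interval hau huv hvb ?_ hf
      filter_upwards [ae_restrict_mem measurableSet_Ioc] with t ht
      exact hf0 t (Ioc_subset_Icc_self ht)

lemma integral_sub_left_rpow {q : ℝ} (hq : -1 < q) (u v : ℝ) :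
    ∫ t in u..v, (t - u) ^ q = (v - u) ^ (q + 1) / (q + 1) := by
  rw [intervalIntegral.integral_comp_sub_right (· ^ q), sub_self, integral_rpow (Or.inl hq),
    Real.zero_rpow (by linarith), sub_zero]

lemma integral_sub_right_rpow {q : ℝ} (hq : -1 < q) (u v : ℝ) :
    ∫ t in u..v, (v - t) ^ q = (v - u) ^ (q + 1) / (q + 1) := by
  rw [intervalIntegral.integral_comp_sub_left (· ^ q), sub_self, integral_rpow (Or.inl hq),
    Real.zero_rpow (by linarith), sub_zero]

lemma integral_le_of_le_mul_abs_sub_rpow {f : ℝ → ℝ} {q r C : ℝ} (hq : -1 < q) (hr : r ∈ Icc 0 1)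
    (hC : 0 ≤ C) (hf : IntervalIntegrable f volume 0 1)
    (hfr : ∀ t ∈ Icc (0 : ℝ) 1, t ≠ r → f t ≤ C * |t - r| ^ q) :
    ∫ t in (0 : ℝ)..1, f t ≤ 2 * C / (q + 1) := by
  have hq1 : 0 < q + 1 := by linarith
  have hf0r : IntervalIntegrable f volume 0 r :=
    hf.mono_set (uIcc_subset_uIcc (by simp) (by simp [hr.1, hr.2]))
  have hfr1 : IntervalIntegrable f volume r 1 :=
    hf.mono_set (uIcc_subset_uIcc (by simp [hr.1, hr.2]) (by simp))
  have hleft : ∫ t in (0 : ℝ)..r, f t ≤ C * (r ^ (q + 1) / (q + 1)) := by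
    rw [← sub_zero r, ← integral_sub_right_rpow hq 0 r, sub_zero,
      ← intervalIntegral.integral_const_mul]
    refine intervalIntegral.integral_mono_on_of_le_Ioo hr.1 hf0r ?_ fun t ht => ?_
    · have := (intervalIntegral.intervalIntegrable_rpow' hq (a := 0) (b := r)).comp_sub_left r
      simpa using (this.const_mul C).symm
    · rw [← abs_of_pos (sub_pos.2 ht.2), abs_sub_comm]
      exact hfr t ⟨ht.1.le, ht.2.le.trans hr.2⟩ ht.2.ne
  have hright : ∫ t in r..1, f t ≤ C * ((1 - r) ^ (q + 1) / (q + 1)) := by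
    rw [← integral_sub_left_rpow hq r 1, ← intervalIntegral.integral_const_mul]
    refine intervalIntegral.integral_mono_on_of_le_Ioo hr.2 hfr1 ?_ fun t ht => ?_
    · have := (intervalIntegral.intervalIntegrable_rpow' hq (a := 0) (b := 1 - r)).comp_sub_right r
      simpa using this.const_mul C
    · rw [← abs_of_pos (sub_pos.2 ht.1)]
      exact hfr t ⟨hr.1.trans ht.1.le, ht.2.le⟩ ht.1.ne'
  have hr1 : r ^ (q + 1) ≤ 1 := Real.rpow_le_one hr.1 hr.2 hq1.le
  have hr2 : (1 - r) ^ (q + 1) ≤ 1 :=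
    Real.rpow_le_one (by linarith [hr.2]) (by linarith [hr.1]) hq1.le
  rw [← intervalIntegral.integral_add_adjacent_intervals hf0r hfr1]
  calc (∫ t in (0 : ℝ)..r, f t) + ∫ t in r..1, f t
      ≤ C * (r ^ (q + 1) + (1 - r) ^ (q + 1)) / (q + 1) := by
        have := add_le_add hleft hright; rwa [← mul_add, ← add_div, ← mul_div_assoc] at this
    _ ≤ 2 * C / (q + 1) := div_le_div_of_nonneg_right (by nlinarith) hq1.le

end Integrals

section SegmentIntegral

variable {p δ a b : ℝ} {h : ℝ → ℝ}

lemma intervalIntegrable_add_rpow (hδ : 0 ≤ δ) (hh : ContinuousOn h (Icc 0 1))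
    (hpos : ∀ t ∈ Icc (0 : ℝ) 1, 0 < h t) :
    IntervalIntegrable (fun t => (δ + h t) ^ (p - 2)) volume 0 1 := by
  refine ContinuousOn.intervalIntegrable ?_
  rw [uIcc_of_le zero_le_one]
  exact (continuousOn_const.add hh).rpow_const fun t ht =>
    Or.inl (add_pos_of_nonneg_of_pos hδ (hpos t ht)).ne'

lemma segment_integral_lower (hδ : 0 ≤ δ) (ha : 0 ≤ a) (hb : 0 ≤ b) (hh : ContinuousOn h (Icc 0 1))
    (hpos : ∀ t ∈ Icc (0 : ℝ) 1, 0 < h t) (hub : ∀ t ∈ Icc (0 : ℝ) 1, h t ≤ a + b)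
    (hlb : ∀ t ∈ Icc (0 : ℝ) 1, |(1 - t) * b - t * a| ≤ h t) :
    (δ + a + b) ^ (p - 2) / (4 * 4 ^ |p - 2|) ≤ ∫ t in (0 : ℝ)..1, (δ + h t) ^ (p - 2) := by
  obtain ⟨u, hu0, hu1, hu⟩ :
      ∃ u : ℝ, 0 ≤ u ∧ u + 1 / 4 ≤ 1 ∧ ∀ t ∈ Icc u (u + 1 / 4), a + b ≤ 4 * h t := by
    rcases le_total a b with hab | hab
    · refine ⟨0, le_rfl, by norm_num, fun t ht => ?_⟩
      have : 3 / 4 * b - 1 / 4 * a ≤ (1 - t) * b - t * a := by nlinarith [ht.1, ht.2]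
      linarith [le_abs_self ((1 - t) * b - t * a), hlb t ⟨ht.1, by linarith [ht.2]⟩]
    · refine ⟨3 / 4, by norm_num, by norm_num, fun t ht => ?_⟩
      have : 3 / 4 * a - 1 / 4 * b ≤ t * a - (1 - t) * b := by nlinarith [ht.1, ht.2]
      linarith [neg_abs_le ((1 - t) * b - t * a), hlb t ⟨by linarith [ht.1], by linarith [ht.2]⟩]
  have hY : 0 < δ + a + b := by linarith [hub 0 (by simp), hpos 0 (by simp)]
  have hm : ∀ t ∈ Icc u (u + 1 / 4), (δ + a + b) ^ (p - 2) / 4 ^ |p - 2| ≤ (δ + h t) ^ (p - 2) := by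
    intro t ht
    have ht01 : t ∈ Icc (0 : ℝ) 1 := ⟨hu0.trans ht.1, ht.2.trans hu1⟩
    rw [div_le_iff₀' (by positivity)]
    exact rpow_le_rpow_abs_mul_rpow (by linarith [hpos t ht01]) (by norm_num)
      (by linarith [hu t ht]) (by linarith [hpos t ht01, hub t ht01])
  calc (δ + a + b) ^ (p - 2) / (4 * 4 ^ |p - 2|)
      = (δ + a + b) ^ (p - 2) / 4 ^ |p - 2| * (u + 1 / 4 - u) := by ring
    _ ≤ ∫ t in (0 : ℝ)..1, (δ + h t) ^ (p - 2) :=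
      mul_sub_le_integral_of_le_on hu0 (by linarith) hu1 (intervalIntegrable_add_rpow hδ hh hpos)
        (fun t ht => Real.rpow_nonneg (by linarith [hpos t ht]) _) hm

lemma segment_integral_upper (hp : 1 < p) (hδ : 0 ≤ δ) (ha : 0 ≤ a) (hb : 0 ≤ b)
    (hh : ContinuousOn h (Icc 0 1))
    (hpos : ∀ t ∈ Icc (0 : ℝ) 1, 0 < h t) (hub : ∀ t ∈ Icc (0 : ℝ) 1, h t ≤ a + b)
    (hlb : ∀ t ∈ Icc (0 : ℝ) 1, |(1 - t) * b - t * a| ≤ h t) :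
    ∫ t in (0 : ℝ)..1, (δ + h t) ^ (p - 2) ≤
      2 ^ |p - 2| * (1 + 2 / (p - 1)) * (δ + a + b) ^ (p - 2) := by
  set Y := δ + a + b
  have hs : 0 < a + b := (hpos 0 (by simp)).trans_le (hub 0 (by simp))
  have hY : 0 < Y := by simp only [Y]; linarith
  have hint := intervalIntegrable_add_rpow (p := p) hδ hh hpos
  by_cases hpt : ∀ t ∈ Icc (0 : ℝ) 1, (δ + h t) ^ (p - 2) ≤ 2 ^ |p - 2| * Y ^ (p - 2)
  · calc ∫ t in (0 : ℝ)..1, (δ + h t) ^ (p - 2) ≤ ∫ _ in (0 : ℝ)..1, 2 ^ |p - 2| * Y ^ (p - 2) :=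
          intervalIntegral.integral_mono_on zero_le_one hint intervalIntegrable_const hpt
      _ ≤ 2 ^ |p - 2| * (1 + 2 / (p - 1)) * Y ^ (p - 2) := by
          have : 0 ≤ 2 / (p - 1) := div_nonneg zero_le_two (by linarith)
          have hK : 0 ≤ 2 ^ |p - 2| * Y ^ (p - 2) := by positivity
          simp only [intervalIntegral.integral_const, sub_zero, one_smul]
          nlinarith
  -- Otherwise `p < 2` and `δ < a + b`, and the integrand has a singularity of order `p - 2`.
  have hp2 : p < 2 := by
    by_contra! hp2
    refine hpt fun t ht => ?_
    calc (δ + h t) ^ (p - 2) ≤ Y ^ (p - 2) :=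
          Real.rpow_le_rpow (by linarith [hpos t ht]) (by linarith [hub t ht]) (by linarith)
      _ ≤ 2 ^ |p - 2| * Y ^ (p - 2) :=
          le_mul_of_one_le_left (Real.rpow_nonneg hY.le _)
            (Real.one_le_rpow one_le_two (abs_nonneg _))
  have hδs : δ < a + b := by
    by_contra! hδs
    exact hpt fun t ht => rpow_le_rpow_abs_mul_rpow hY one_le_two
      (by linarith [hpos t ht, hub t ht]) (by linarith [hpos t ht])
  set r := b / (a + b)
  have hr : r ∈ Icc (0 : ℝ) 1 := ⟨by positivity, div_le_one_of_le₀ (by linarith) hs.le⟩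
  have hsing : ∀ t ∈ Icc (0 : ℝ) 1, t ≠ r →
      (δ + h t) ^ (p - 2) ≤ (a + b) ^ (p - 2) * |t - r| ^ (p - 2) := by
    intro t ht htr
    have hdist : (a + b) * |t - r| = |(1 - t) * b - t * a| := by
      have : (a + b) * (t - r) = -((1 - t) * b - t * a) := by simp only [r]; field_simp; ring
      rw [← abs_of_pos hs, ← abs_mul, this, abs_neg]
    have hd : 0 < (a + b) * |t - r| := mul_pos hs (abs_pos.2 (sub_ne_zero.2 htr))
    rw [← Real.mul_rpow hs.le (abs_nonneg _)]
    exact Real.rpow_le_rpow_of_nonpos hd (by linarith [hlb t ht]) (by linarith)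
  calc ∫ t in (0 : ℝ)..1, (δ + h t) ^ (p - 2) ≤ 2 * (a + b) ^ (p - 2) / (p - 2 + 1) :=
        integral_le_of_le_mul_abs_sub_rpow (by linarith) hr (by positivity) hint hsing
    _ ≤ 2 * (2 ^ |p - 2| * Y ^ (p - 2)) / (p - 1) := by
        rw [show p - 2 + 1 = p - 1 by ring]
        gcongr
        exact rpow_le_rpow_abs_mul_rpow hY one_le_two (by linarith) (by linarith)
    _ = 2 ^ |p - 2| * (2 / (p - 1)) * Y ^ (p - 2) := by ring
    _ ≤ 2 ^ |p - 2| * (1 + 2 / (p - 1)) * Y ^ (p - 2) := by gcongr; linarith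

end SegmentIntegral

section ShiftedNFunction

variable {p δ a t : ℝ}

lemma phiShift_eq_integral (ha : 0 ≤ a) (ht : 0 ≤ t) :
    phiShift p δ a t = ∫ s in (0 : ℝ)..t, (δ + a + s) ^ (p - 2) * s := by
  refine intervalIntegral.integral_congr fun s hs => ?_
  rw [uIcc_of_le ht] at hs
  rcases (add_nonneg ha hs.1).eq_or_lt with has | has
  · obtain rfl : s = 0 := by linarith [hs.1]
    simp
  · simp only [phi']
    field_simp
    ring_nf

lemma add_rpow_sub_two_mul_le {c s : ℝ} (hp : 1 ≤ p) (hc : 0 ≤ c) (hs : 0 ≤ s) (hst : s ≤ t) :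
    (c + s) ^ (p - 2) * s ≤ (c + t) ^ (p - 1) := by
  rcases (add_nonneg hc hs).eq_or_lt with hcs | hcs
  · obtain rfl : s = 0 := by linarith
    simpa using Real.rpow_nonneg (by linarith) _
  calc (c + s) ^ (p - 2) * s ≤ (c + s) ^ (p - 2) * (c + s) := by gcongr; linarith
    _ = (c + s) ^ (p - 1) := by rw [← Real.rpow_add_one hcs.ne']; ring_nf
    _ ≤ (c + t) ^ (p - 1) := Real.rpow_le_rpow hcs.le (by linarith) (by linarith)

lemma phiShift_lower (hp : 1 ≤ p) (hδ : 0 ≤ δ) (ha : 0 ≤ a) (ht : 0 ≤ t) :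
    (δ + a + t) ^ (p - 2) * t ^ 2 / (4 * 2 ^ |p - 2|) ≤ phiShift p δ a t := by
  rcases ht.eq_or_lt with rfl | ht
  · simp [phiShift]
  set X := δ + a + t
  have hX : 0 < X := by simp only [X]; linarith
  rw [phiShift_eq_integral ha ht.le]
  have hint : IntervalIntegrable (fun s => (δ + a + s) ^ (p - 2) * s) volume 0 t := by
    refine intervalIntegrable_const (c := X ^ (p - 1)) |>.mono_fun' (by fun_prop) ?_
    filter_upwards [ae_restrict_mem measurableSet_uIoc] with s hs
    rw [uIoc_of_le ht.le] at hs
    rw [Real.norm_eq_abs, abs_of_nonneg (by have := hs.1; positivity)]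
    exact add_rpow_sub_two_mul_le hp (by positivity) hs.1.le hs.2
  have hm : ∀ s ∈ Icc (t / 2) t,
      X ^ (p - 2) / 2 ^ |p - 2| * (t / 2) ≤ (δ + a + s) ^ (p - 2) * s := by
    intro s hs
    have hs0 : 0 < s := by linarith [hs.1]
    gcongr
    · rw [div_le_iff₀' (by positivity)]
      exact rpow_le_rpow_abs_mul_rpow (by positivity) one_le_two (by linarith [hs.1])
        (by linarith [hs.2])
    · exact hs.1
  calc X ^ (p - 2) * t ^ 2 / (4 * 2 ^ |p - 2|)
      = X ^ (p - 2) / 2 ^ |p - 2| * (t / 2) * (t - t / 2) := by ring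
    _ ≤ ∫ s in (0 : ℝ)..t, (δ + a + s) ^ (p - 2) * s :=
        mul_sub_le_integral_of_le_on (by linarith) (by linarith) le_rfl hint
          (fun s hs => by have := hs.1; positivity) hm

lemma phiShift_upper (hp : 1 ≤ p) (hδ : 0 ≤ δ) (ha : 0 ≤ a) (ht : 0 ≤ t) :
    phiShift p δ a t ≤ 2 * 2 ^ |p - 2| * ((δ + a + t) ^ (p - 2) * t ^ 2) := by
  rcases ht.eq_or_lt with rfl | ht
  · simp [phiShift]
  set X := δ + a + t
  have hX : 0 < X := by simp only [X]; linarith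
  have h2 : (1 : ℝ) ≤ 2 ^ |p - 2| := Real.one_le_rpow one_le_two (abs_nonneg _)
  have hbound : ∀ s ∈ uIoc 0 t,
      ‖(δ + a + s) ^ (p - 2) * s‖ ≤ 2 * 2 ^ |p - 2| * X ^ (p - 2) * t := by
    intro s hs
    rw [uIoc_of_le ht.le] at hs
    rw [Real.norm_eq_abs, abs_of_nonneg (by have := hs.1; positivity)]
    rcases le_or_gt (δ + a) t with hδa | hδa
    · calc (δ + a + s) ^ (p - 2) * s ≤ X ^ (p - 1) :=
            add_rpow_sub_two_mul_le hp (by positivity) hs.1.le hs.2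
        _ = X ^ (p - 2) * X := by rw [← Real.rpow_add_one hX.ne']; ring_nf
        _ ≤ X ^ (p - 2) * (2 * t) := by gcongr; simp only [X]; linarith
        _ ≤ 2 * 2 ^ |p - 2| * X ^ (p - 2) * t := by
          have : 0 ≤ X ^ (p - 2) * t := by positivity
          nlinarith
    · calc (δ + a + s) ^ (p - 2) * s ≤ 2 ^ |p - 2| * X ^ (p - 2) * t := by
            refine mul_le_mul ?_ hs.2 hs.1.le (by positivity)
            exact rpow_le_rpow_abs_mul_rpow hX one_le_two (by linarith [hs.2]) (by linarith [hs.1])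
        _ ≤ 2 * 2 ^ |p - 2| * X ^ (p - 2) * t := by
          have : 0 ≤ 2 ^ |p - 2| * X ^ (p - 2) * t := by positivity
          linarith
  rw [phiShift_eq_integral ha ht.le]
  calc ∫ s in (0 : ℝ)..t, (δ + a + s) ^ (p - 2) * s
      ≤ ‖∫ s in (0 : ℝ)..t, (δ + a + s) ^ (p - 2) * s‖ := Real.le_norm_self _
    _ ≤ 2 * 2 ^ |p - 2| * X ^ (p - 2) * t * |t - 0| :=
        intervalIntegral.norm_integral_le_of_norm_le_const hbound
    _ = 2 * 2 ^ |p - 2| * (X ^ (p - 2) * t ^ 2) := by rw [sub_zero, abs_of_pos ht]; ring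

end ShiftedNFunction

section Segment

variable {S : Mat3 → Mat3} {A B : Mat3}

lemma transpose_segment (hA : Aᵀ = A) (hB : Bᵀ = B) (t : ℝ) :
    (B + t • (A - B))ᵀ = B + t • (A - B) := by
  rw [transpose_add, transpose_smul, transpose_sub, hA, hB]

lemma mnorm_segment_le {t : ℝ} (ht : t ∈ Icc (0 : ℝ) 1) :
    mnorm (B + t • (A - B)) ≤ mnorm A + mnorm B := by
  have h : B + t • (A - B) = (1 - t) • B + t • A := by module
  calc mnorm (B + t • (A - B)) ≤ mnorm ((1 - t) • B) + mnorm (t • A) := h ▸ mnorm_add_le _ _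
    _ = (1 - t) * mnorm B + t * mnorm A := by
      rw [mnorm_smul, mnorm_smul, abs_of_nonneg (by linarith [ht.2]), abs_of_nonneg ht.1]
    _ ≤ mnorm A + mnorm B := by nlinarith [mnorm_nonneg A, mnorm_nonneg B, ht.1, ht.2]

lemma abs_sub_le_mnorm_segment {t : ℝ} (ht : t ∈ Icc (0 : ℝ) 1) :
    |(1 - t) * mnorm B - t * mnorm A| ≤ mnorm (B + t • (A - B)) := by
  have h := abs_mnorm_sub_mnorm_le ((1 - t) • B) (-(t • A))
  rwa [sub_neg_eq_add, show (1 - t) • B + t • A = B + t • (A - B) by module, mnorm_neg,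
    mnorm_smul, mnorm_smul, abs_of_nonneg (sub_nonneg.2 ht.2), abs_of_nonneg ht.1] at h

lemma continuousOn_mdot_fderiv_segment (hS : ContDiffOn ℝ 1 S {0}ᶜ)
    (hseg : ∀ t ∈ Icc (0 : ℝ) 1, B + t • (A - B) ≠ 0) :
    ContinuousOn (fun t : ℝ => mdot (fderiv ℝ S (B + t • (A - B)) (A - B)) (A - B)) (Icc 0 1) := by
  have hfd := hS.continuousOn_fderiv_of_isOpen isOpen_compl_singleton le_rfl
  refine (continuous_mdot_left (A - B)).comp_continuousOn
    ((hfd.comp (by fun_prop) fun t ht => hseg t ht).clm_apply continuousOn_const)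

lemma mdot_sub_eq_integral_fderiv (hS : ContDiffOn ℝ 1 S {0}ᶜ)
    (hseg : ∀ t ∈ Icc (0 : ℝ) 1, B + t • (A - B) ≠ 0) :
    mdot (S A - S B) (A - B) =
      ∫ t in (0 : ℝ)..1, mdot (fderiv ℝ S (B + t • (A - B)) (A - B)) (A - B) := by
  have hderiv : ∀ t ∈ uIcc (0 : ℝ) 1, HasDerivAt (fun s : ℝ => mdot (S (B + s • (A - B))) (A - B))
      (mdot (fderiv ℝ S (B + t • (A - B)) (A - B)) (A - B)) t := by
    intro t ht
    rw [uIcc_of_le zero_le_one] at ht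
    have hpath : HasDerivAt (fun s : ℝ => B + s • (A - B)) (A - B) t := by
      have := ((hasDerivAt_id t).smul_const (A - B)).const_add B
      rwa [one_smul] at this
    have hSd := ((hS.differentiableOn one_ne_zero).differentiableAt
      (isOpen_compl_singleton.mem_nhds (hseg t ht))).hasFDerivAt.comp_hasDerivAt t hpath
    unfold mdot
    exact HasDerivAt.fun_sum fun i _ => HasDerivAt.fun_sum fun j _ =>
      (hasDerivAt_pi.1 (hasDerivAt_pi.1 hSd i) j).mul_const _
  have hint := (continuousOn_mdot_fderiv_segment hS hseg).intervalIntegrable_of_Icc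
    (μ := volume) zero_le_one
  rw [intervalIntegral.integral_eq_sub_of_hasDerivAt hderiv hint, one_smul, zero_smul, add_zero,
    add_sub_cancel, mdot_sub_left]

end Segment

/-- Up to constants depending on `p`, this is `φ''(|A| + |B|) |A - B|²`. -/
def segWeight (p δ : ℝ) (A B : Mat3) : ℝ := (δ + mnorm A + mnorm B) ^ (p - 2) * mnorm (A - B) ^ 2

lemma segWeight_comparable {p δ : ℝ} (hδ : 0 ≤ δ) (A B : Mat3) :
    segWeight p δ A B ≤
        2 ^ |p - 2| * ((δ + mnorm A + mnorm (A - B)) ^ (p - 2) * mnorm (A - B) ^ 2) ∧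
      (δ + mnorm A + mnorm (A - B)) ^ (p - 2) * mnorm (A - B) ^ 2 ≤
        2 ^ |p - 2| * segWeight p δ A B := by
  rcases eq_or_ne A B with rfl | hAB
  · simp [segWeight]
  have hd := mnorm_pos (sub_ne_zero.2 hAB)
  have h1 := mnorm_sub_le A B
  have h2 : mnorm B ≤ mnorm A + mnorm (A - B) := by simpa using mnorm_sub_le A (A - B)
  have hA := mnorm_nonneg A
  have hB := mnorm_nonneg B
  unfold segWeight
  constructor
  · rw [← mul_assoc]
    gcongr
    exact rpow_le_rpow_abs_mul_rpow (by linarith) one_le_two (by linarith) (by linarith)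
  · rw [← mul_assoc]
    gcongr
    exact rpow_le_rpow_abs_mul_rpow (by linarith) one_le_two (by linarith) (by linarith)

section Perturbation

variable {p δ : ℝ} {S : Mat3 → Mat3}

lemma le_of_forall_pos_of_continuousAt {f g : ℝ → ℝ} (hf : ContinuousAt f 0)
    (hg : ContinuousAt g 0) (h : ∀ ε > 0, f ε ≤ g ε) : f 0 ≤ g 0 :=
  le_of_tendsto_of_tendsto (hf.tendsto.mono_left nhdsWithin_le_nhds)
    (hg.tendsto.mono_left nhdsWithin_le_nhds) (eventually_nhdsWithin_of_forall (s := Ioi 0) h)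

lemma shifted_segment_ne_zero {A B E : Mat3} {t₀ ε : ℝ} (ht₀ : B + t₀ • (A - B) = 0)
    (hE0 : E ≠ 0) (hVE : mdot (A - B) E = 0) (hε : 0 < ε) (t : ℝ) :
    B + ε • E + t • (A - B) ≠ 0 := by
  intro h0
  have hpt : B + ε • E + t • (A - B) = (t - t₀) • (A - B) + ε • E := by
    linear_combination (norm := module) ht₀
  have := congrArg (fun M => mdot M E) (hpt.symm.trans h0)
  simp only [mdot_eq_inner, map_add, map_smul, map_zero, inner_add_left, real_inner_smul_left,
    inner_zero_left] at this hVE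
  rw [hVE, mul_zero, zero_add, ← mdot_eq_inner, ← mnorm_sq] at this
  exact (mul_pos hε (pow_pos (mnorm_pos hE0) 2)).ne' this

/-- A segment through `0` is the limit of segments shifted off `0` in a symmetric direction
orthogonal to it, and both sides of the estimate are continuous in the shift. -/
lemma bounds_of_bounds_of_segment_ne_zero (hS : Continuous S) (hδ : 0 ≤ δ) {c C : ℝ}
    (hgood : ∀ A B : Mat3, Aᵀ = A → Bᵀ = B → (∀ t ∈ Icc (0 : ℝ) 1, B + t • (A - B) ≠ 0) →
      c * segWeight p δ A B ≤ mdot (S A - S B) (A - B) ∧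
        mdot (S A - S B) (A - B) ≤ C * segWeight p δ A B)
    {A B : Mat3} (hA : Aᵀ = A) (hB : Bᵀ = B) :
    c * segWeight p δ A B ≤ mdot (S A - S B) (A - B) ∧
      mdot (S A - S B) (A - B) ≤ C * segWeight p δ A B := by
  rcases eq_or_ne A B with rfl | hAB
  · simp [segWeight]
  by_cases hseg : ∀ t ∈ Icc (0 : ℝ) 1, B + t • (A - B) ≠ 0
  · exact hgood A B hA hB hseg
  push Not at hseg
  obtain ⟨t₀, -, ht₀⟩ := hseg
  obtain ⟨E, hE, hE0, hVE⟩ := exists_symm_ne_zero_mdot_eq_zero (A - B)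
  have hshift : ∀ ε : ℝ, 0 < ε → c * segWeight p δ (A + ε • E) (B + ε • E) ≤
        mdot (S (A + ε • E) - S (B + ε • E)) (A - B) ∧
      mdot (S (A + ε • E) - S (B + ε • E)) (A - B) ≤
        C * segWeight p δ (A + ε • E) (B + ε • E) := by
    intro ε hε
    have hdiff : A + ε • E - (B + ε • E) = A - B := by abel
    refine hdiff ▸ hgood _ _ (by simp [hA, hE]) (by simp [hB, hE]) fun t _ => ?_
    rw [hdiff]
    exact shifted_segment_ne_zero ht₀ hE0 hVE hε t
  have hY : 0 < δ + mnorm A + mnorm B := by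
    linarith [mnorm_pos (sub_ne_zero.2 hAB), mnorm_sub_le A B]
  have hcont_mdot : ContinuousAt (fun ε : ℝ => mdot (S (A + ε • E) - S (B + ε • E)) (A - B)) 0 :=
    ((continuous_mdot_left _).comp (by fun_prop)).continuousAt
  have hcont_w : ContinuousAt (fun ε : ℝ => segWeight p δ (A + ε • E) (B + ε • E)) 0 := by
    unfold segWeight
    refine ContinuousAt.mul (ContinuousAt.rpow_const (by fun_prop) (Or.inl ?_)) (by fun_prop)
    simpa using hY.ne'
  constructor
  · simpa using le_of_forall_pos_of_continuousAt (hcont_w.const_mul c) hcont_mdot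
      fun ε hε => (hshift ε hε).1
  · simpa using le_of_forall_pos_of_continuousAt hcont_mdot (hcont_w.const_mul C)
      fun ε hε => (hshift ε hε).2

end Perturbation

namespace PDelta

variable {p δ κ₀ κ₁ : ℝ} {S : Mat3 → Mat3}

lemma le_mdot_fderiv (hS : PDelta p δ κ₀ κ₁ S) {X D : Mat3} (hX : Xᵀ = X) (hX0 : X ≠ 0)
    (hD : Dᵀ = D) : κ₀ * phi'' p δ (mnorm X) * mnorm D ^ 2 ≤ mdot (fderiv ℝ S X D) D := by
  have h := hS.lower X D (by rwa [msym_eq_self hX])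
  simp only [DS] at h
  rwa [msym_eq_self hX, msym_eq_self hD, ← mdot_apply_eq_sum] at h

lemma mdot_fderiv_le (hS : PDelta p δ κ₀ κ₁ S) {X : Mat3} (hX : Xᵀ = X) (hX0 : X ≠ 0) (D : Mat3) :
    mdot (fderiv ℝ S X D) D ≤ 81 * κ₁ * phi'' p δ (mnorm X) * mnorm D ^ 2 := by
  have hterm : ∀ i j k l, fderiv ℝ S X (single k l 1) i j * D i j * D k l ≤
      κ₁ * phi'' p δ (mnorm X) * mnorm D ^ 2 := by
    intro i j k l
    have h := hS.upper X (by rwa [msym_eq_self hX]) i j k l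
    rw [msym_eq_self hX] at h
    have hc : 0 ≤ κ₁ * phi'' p δ (mnorm X) := (abs_nonneg _).trans h
    calc _ ≤ |fderiv ℝ S X (single k l 1) i j| * |D i j| * |D k l| := by
          rw [← abs_mul, ← abs_mul]; exact le_abs_self _
      _ ≤ κ₁ * phi'' p δ (mnorm X) * mnorm D * mnorm D :=
          mul_le_mul (mul_le_mul h (abs_apply_le_mnorm D i j) (abs_nonneg _) hc)
            (abs_apply_le_mnorm D k l) (abs_nonneg _) (mul_nonneg hc (mnorm_nonneg D))
      _ = κ₁ * phi'' p δ (mnorm X) * mnorm D ^ 2 := by ring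
  rw [mdot_apply_eq_sum]
  calc _ ≤ ∑ _i : Fin 3, ∑ _j : Fin 3, ∑ _k : Fin 3, ∑ _l : Fin 3,
        κ₁ * phi'' p δ (mnorm X) * mnorm D ^ 2 :=
        Finset.sum_le_sum fun i _ => Finset.sum_le_sum fun j _ =>
          Finset.sum_le_sum fun k _ => Finset.sum_le_sum fun l _ => hterm i j k l
    _ = 81 * κ₁ * phi'' p δ (mnorm X) * mnorm D ^ 2 := by
        simp only [Finset.sum_const, Finset.card_univ, Fintype.card_fin, nsmul_eq_mul]; ring

variable {A B : Mat3}

lemma le_mdot_sub_of_segment (hS : PDelta p δ κ₀ κ₁ S) (hp : 1 < p) (hδ : 0 ≤ δ) (hκ₀ : 0 ≤ κ₀)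
    (hA : Aᵀ = A) (hB : Bᵀ = B) (hseg : ∀ t ∈ Icc (0 : ℝ) 1, B + t • (A - B) ≠ 0) :
    κ₀ * min 1 (p - 1) / (4 * 4 ^ |p - 2|) * segWeight p δ A B ≤ mdot (S A - S B) (A - B) := by
  set h := fun t : ℝ => mnorm (B + t • (A - B))
  have hh : ContinuousOn h (Icc 0 1) := (continuous_mnorm.comp (by fun_prop)).continuousOn
  have hpos : ∀ t ∈ Icc (0 : ℝ) 1, 0 < h t := fun t ht => mnorm_pos (hseg t ht)
  have hpt : ∀ t ∈ Icc (0 : ℝ) 1, κ₀ * min 1 (p - 1) * mnorm (A - B) ^ 2 * (δ + h t) ^ (p - 2) ≤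
      mdot (fderiv ℝ S (B + t • (A - B)) (A - B)) (A - B) := by
    intro t ht
    calc _ = κ₀ * (min 1 (p - 1) * (δ + h t) ^ (p - 2)) * mnorm (A - B) ^ 2 := by ring
      _ ≤ κ₀ * phi'' p δ (h t) * mnorm (A - B) ^ 2 := by
          gcongr; exact (phi''_comparable hδ (hpos t ht)).1
      _ ≤ _ := hS.le_mdot_fderiv (transpose_segment hA hB t) (hseg t ht)
          (by rw [transpose_sub, hA, hB])
  rw [mdot_sub_eq_integral_fderiv hS.smooth hseg]
  calc κ₀ * min 1 (p - 1) / (4 * 4 ^ |p - 2|) * segWeight p δ A B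
      = κ₀ * min 1 (p - 1) * mnorm (A - B) ^ 2 *
          ((δ + mnorm A + mnorm B) ^ (p - 2) / (4 * 4 ^ |p - 2|)) := by
        unfold segWeight; ring
    _ ≤ κ₀ * min 1 (p - 1) * mnorm (A - B) ^ 2 * ∫ t in (0 : ℝ)..1, (δ + h t) ^ (p - 2) := by
        gcongr
        exact segment_integral_lower hδ (mnorm_nonneg A) (mnorm_nonneg B) hh hpos
          (fun t ht => mnorm_segment_le ht) (fun t ht => abs_sub_le_mnorm_segment ht)
    _ ≤ _ := by
        rw [← intervalIntegral.integral_const_mul]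
        exact intervalIntegral.integral_mono_on zero_le_one
          ((intervalIntegrable_add_rpow hδ hh hpos).const_mul _)
          ((continuousOn_mdot_fderiv_segment hS.smooth hseg).intervalIntegrable_of_Icc
            zero_le_one) hpt

lemma mdot_sub_le_of_segment (hS : PDelta p δ κ₀ κ₁ S) (hp : 1 < p) (hδ : 0 ≤ δ) (hκ₁ : 0 ≤ κ₁)
    (hA : Aᵀ = A) (hB : Bᵀ = B) (hseg : ∀ t ∈ Icc (0 : ℝ) 1, B + t • (A - B) ≠ 0) :
    mdot (S A - S B) (A - B) ≤
      81 * κ₁ * max 1 (p - 1) * (2 ^ |p - 2| * (1 + 2 / (p - 1))) * segWeight p δ A B := by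
  set h := fun t : ℝ => mnorm (B + t • (A - B))
  have hh : ContinuousOn h (Icc 0 1) := (continuous_mnorm.comp (by fun_prop)).continuousOn
  have hpos : ∀ t ∈ Icc (0 : ℝ) 1, 0 < h t := fun t ht => mnorm_pos (hseg t ht)
  have hpt : ∀ t ∈ Icc (0 : ℝ) 1, mdot (fderiv ℝ S (B + t • (A - B)) (A - B)) (A - B) ≤
      81 * κ₁ * max 1 (p - 1) * mnorm (A - B) ^ 2 * (δ + h t) ^ (p - 2) := by
    intro t ht
    calc _ ≤ 81 * κ₁ * phi'' p δ (h t) * mnorm (A - B) ^ 2 :=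
          hS.mdot_fderiv_le (transpose_segment hA hB t) (hseg t ht) _
      _ ≤ 81 * κ₁ * (max 1 (p - 1) * (δ + h t) ^ (p - 2)) * mnorm (A - B) ^ 2 := by
          gcongr; exact (phi''_comparable hδ (hpos t ht)).2
      _ = _ := by ring
  rw [mdot_sub_eq_integral_fderiv hS.smooth hseg]
  calc _ ≤ ∫ t in (0 : ℝ)..1, 81 * κ₁ * max 1 (p - 1) * mnorm (A - B) ^ 2 * (δ + h t) ^ (p - 2) :=
        intervalIntegral.integral_mono_on zero_le_one
          ((continuousOn_mdot_fderiv_segment hS.smooth hseg).intervalIntegrable_of_Icc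
            zero_le_one) ((intervalIntegrable_add_rpow hδ hh hpos).const_mul _) hpt
    _ = 81 * κ₁ * max 1 (p - 1) * mnorm (A - B) ^ 2 * ∫ t in (0 : ℝ)..1, (δ + h t) ^ (p - 2) :=
        intervalIntegral.integral_const_mul _ _
    _ ≤ 81 * κ₁ * max 1 (p - 1) * mnorm (A - B) ^ 2 *
          (2 ^ |p - 2| * (1 + 2 / (p - 1)) * (δ + mnorm A + mnorm B) ^ (p - 2)) := by
        gcongr
        exact segment_integral_upper hp hδ (mnorm_nonneg A) (mnorm_nonneg B) hh hpos
          (fun t ht => mnorm_segment_le ht) (fun t ht => abs_sub_le_mnorm_segment ht)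
    _ = _ := by unfold segWeight; ring

lemma mdot_sub_eq_mdot_msym (hS : PDelta p δ κ₀ κ₁ S) (P Q : Mat3) :
    mdot (S P - S Q) (P - Q) = mdot (S (msym P) - S (msym Q)) (msym P - msym Q) := by
  have hM : (S P - S Q)ᵀ = S P - S Q := by rw [transpose_sub, hS.symval, hS.symval]
  rw [← mdot_msym_right hM, msym_sub, hS.symdep P, hS.symdep Q]

lemma exists_bounds (hp : 1 < p) (hκ₀ : 0 < κ₀) (hκ₁ : 0 < κ₁) :
    ∃ c C : ℝ, 0 < c ∧ 0 < C ∧ ∀ δ : ℝ, 0 ≤ δ → ∀ S : Mat3 → Mat3, PDelta p δ κ₀ κ₁ S →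
      ∀ A B : Mat3, Aᵀ = A → Bᵀ = B →
        c * ((δ + mnorm A + mnorm (A - B)) ^ (p - 2) * mnorm (A - B) ^ 2) ≤
            mdot (S A - S B) (A - B) ∧
          mdot (S A - S B) (A - B) ≤
            C * ((δ + mnorm A + mnorm (A - B)) ^ (p - 2) * mnorm (A - B) ^ 2) := by
  set c₀ := κ₀ * min 1 (p - 1) / (4 * 4 ^ |p - 2|)
  set C₀ := 81 * κ₁ * max 1 (p - 1) * (2 ^ |p - 2| * (1 + 2 / (p - 1)))
  have hc₀ : 0 < c₀ := by
    have : 0 < min 1 (p - 1) := lt_min one_pos (by linarith)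
    positivity
  have hC₀ : 0 < C₀ := by
    have : 0 < p - 1 := by linarith
    positivity
  refine ⟨c₀ / 2 ^ |p - 2|, C₀ * 2 ^ |p - 2|, by positivity, by positivity,
    fun δ hδ S hS A B hA hB => ?_⟩
  obtain ⟨hlow, hup⟩ := bounds_of_bounds_of_segment_ne_zero hS.cont hδ (c := c₀) (C := C₀)
    (fun A B hA hB hseg => ⟨hS.le_mdot_sub_of_segment hp hδ hκ₀.le hA hB hseg,
      hS.mdot_sub_le_of_segment hp hδ hκ₁.le hA hB hseg⟩) hA hB
  obtain ⟨hw₁, hw₂⟩ := segWeight_comparable (p := p) hδ A B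
  constructor
  · calc c₀ / 2 ^ |p - 2| * ((δ + mnorm A + mnorm (A - B)) ^ (p - 2) * mnorm (A - B) ^ 2)
        = c₀ * ((δ + mnorm A + mnorm (A - B)) ^ (p - 2) * mnorm (A - B) ^ 2 / 2 ^ |p - 2|) := by
          ring
      _ ≤ c₀ * segWeight p δ A B := by
          gcongr
          rw [div_le_iff₀' (by positivity)]
          exact hw₂
      _ ≤ _ := hlow
  · calc _ ≤ C₀ * segWeight p δ A B := hup
      _ ≤ C₀ * (2 ^ |p - 2| * ((δ + mnorm A + mnorm (A - B)) ^ (p - 2) * mnorm (A - B) ^ 2)) := by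
          gcongr
      _ = _ := by ring

end PDelta

/-- Hammer estimate: for `S` with `(p,δ)`-structure,
`(S(P) − S(Q))·(P − Q) ∼ φ_{|P^sym|}(|P^sym − Q^sym|)` with constants depending only on
the characteristics `(κ₀, κ₁, p)` of `S`. -/
theorem hammer_shifted (p κ₀ κ₁ : ℝ) (hp : 1 < p) (hκ₀ : 0 < κ₀) (hκ₁ : 0 < κ₁) :
    ∃ c C : ℝ, 0 < c ∧ 0 < C ∧ ∀ δ : ℝ, 0 ≤ δ → ∀ S : Mat3 → Mat3,
      PDelta p δ κ₀ κ₁ S → ∀ P Q : Mat3,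
        c * phiShift p δ (mnorm (msym P)) (mnorm (msym P - msym Q)) ≤
            mdot (S P - S Q) (P - Q) ∧
        mdot (S P - S Q) (P - Q) ≤
            C * phiShift p δ (mnorm (msym P)) (mnorm (msym P - msym Q)) := by
  obtain ⟨c, C, hc, hC, hbounds⟩ := PDelta.exists_bounds hp hκ₀ hκ₁
  refine ⟨c / (2 * 2 ^ |p - 2|), C * (4 * 2 ^ |p - 2|), by positivity, by positivity,
    fun δ hδ S hS P Q => ?_⟩
  rw [hS.mdot_sub_eq_mdot_msym]
  obtain ⟨hlow, hup⟩ := hbounds δ hδ S hS _ _ (transpose_msym P) (transpose_msym Q)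
  have hφ₁ := phiShift_lower hp.le hδ (mnorm_nonneg (msym P)) (mnorm_nonneg (msym P - msym Q))
  have hφ₂ := phiShift_upper hp.le hδ (mnorm_nonneg (msym P)) (mnorm_nonneg (msym P - msym Q))
  set W := (δ + mnorm (msym P) + mnorm (msym P - msym Q)) ^ (p - 2) * mnorm (msym P - msym Q) ^ 2
  set φ := phiShift p δ (mnorm (msym P)) (mnorm (msym P - msym Q))
  constructor
  · calc c / (2 * 2 ^ |p - 2|) * φ ≤ c / (2 * 2 ^ |p - 2|) * (2 * 2 ^ |p - 2| * W) := by gcongr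
      _ = c * W := by field_simp
      _ ≤ _ := hlow
  · calc _ ≤ C * W := hup
      _ = C * (4 * 2 ^ |p - 2|) * (W / (4 * 2 ^ |p - 2|)) := by field_simp
      _ ≤ C * (4 * 2 ^ |p - 2|) * φ := by gcongr
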